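/- arXiv:1011.3675 — 2 statements merged into one kernel-verified Lean document; each statement's English description precedes it below -/
import Mathlib

section
/- Suppose Ψ ∈ C_0^∞(-1,1) changes sign and α is large enough (α > r for r as below). Then the lowest eigenvalue λ₁^ε of the operator S_ε = d⁴/dx⁴ + U + Ψ_ε with Dirichlet boundary conditions on (a,b) satisfies λ₁^ε ≤ −c ε^{-4} for some constant c > 0 and all sufficiently small ε > 0. -/
open MeasureTheory Set Filter Topology

/-- The four-term singular perturbation. -/
noncomputable def singPert (Ψ Φ Υ₁ Υ₂ : ℝ → ℝ) (α β γ₁ γ₂ ε x : ℝ) : ℝ :=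
  (α / ε ^ 4) * Ψ (x / ε) + (β / ε ^ 3) * Φ (x / ε) +
    (γ₁ / ε ^ 2) * Υ₁ (x / ε) + (γ₂ / ε) * Υ₂ (x / ε)

private lemma iterDeriv_zero_of_nmem {f : ℝ → ℝ} {n : ℕ} {x : ℝ}
    (hx : x ∉ tsupport f) : iteratedDeriv n f x = 0 := by
  rw [iteratedDeriv_eq_iteratedFDeriv]
  have h : iteratedFDeriv ℝ n f x = 0 := by
    by_contra h
    exact hx (support_iteratedFDeriv_subset n (by simpa [Function.mem_support] using h))
  simp [h]

private lemma iterDeriv_const_mul_fun {n : ℕ} (c : ℝ) {f : ℝ → ℝ} (hf : ContDiff ℝ n f) :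
    iteratedDeriv n (fun x => c * f x) = fun x => c * iteratedDeriv n f x := by
  funext x
  rw [← iteratedDerivWithin_univ, ← iteratedDerivWithin_univ]
  exact iteratedDerivWithin_const_mul (Set.mem_univ x) uniqueDiffOn_univ c hf.contDiffWithinAt

private lemma integral_scaled {c₁ c₂ a b ε : ℝ} (g : ℝ → ℝ) (hg : Continuous g)
    (hg0 : ∀ x, x ∉ Set.Ioo c₁ c₂ → g x = 0) (hε : 0 < ε)
    (h1 : a / ε ≤ c₁) (h2 : c₂ ≤ b / ε) :
    (∫ x in a..b, g (x / ε)) = ε * ∫ ξ in c₁..c₂, g ξ := by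
  rw [intervalIntegral.integral_comp_div (f := g) hε.ne', smul_eq_mul]
  congr 1
  have i1 : IntervalIntegrable g volume (a/ε) c₁ := hg.intervalIntegrable _ _
  have i2 : IntervalIntegrable g volume c₁ c₂ := hg.intervalIntegrable _ _
  have i3 : IntervalIntegrable g volume c₂ (b/ε) := hg.intervalIntegrable _ _
  have z1 : (∫ x in (a/ε)..c₁, g x) = 0 := by
    have he : Set.EqOn g (fun _ => (0:ℝ)) (Set.uIcc (a/ε) c₁) := by
      intro x hx
      rw [Set.uIcc_of_le h1] at hx
      exact hg0 x (fun hmem => absurd hmem.1 (not_lt.mpr hx.2))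
    rw [intervalIntegral.integral_congr he, intervalIntegral.integral_zero]
  have z3 : (∫ x in c₂..(b/ε), g x) = 0 := by
    have he : Set.EqOn g (fun _ => (0:ℝ)) (Set.uIcc c₂ (b/ε)) := by
      intro x hx
      rw [Set.uIcc_of_le h2] at hx
      exact hg0 x (fun hmem => absurd hmem.2 (not_lt.mpr hx.1))
    rw [intervalIntegral.integral_congr he, intervalIntegral.integral_zero]
  calc (∫ x in (a/ε)..(b/ε), g x)
      = (∫ x in (a/ε)..c₂, g x) + ∫ x in c₂..(b/ε), g x :=
        (intervalIntegral.integral_add_adjacent_intervals (i1.trans i2) i3).symm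
    _ = ((∫ x in (a/ε)..c₁, g x) + ∫ x in c₁..c₂, g x) + ∫ x in c₂..(b/ε), g x := by
        rw [intervalIntegral.integral_add_adjacent_intervals i1 i2]
    _ = ∫ x in c₁..c₂, g x := by rw [z1, z3]; ring


private lemma aux_mul_le {I M e f : ℝ} (h : I ≤ M) (hM : 0 ≤ M) (hf : 0 ≤ f)
    (hfe : f ≤ e) : I * f ≤ M * e :=
  (mul_le_mul_of_nonneg_right h hf).trans (mul_le_mul_of_nonneg_left hfe hM)

private lemma aux_half {M x y z δ ε : ℝ} (hε : 0 ≤ ε)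
    (h : ε * (2 * (M + x + y + z + 1)) < δ) :
    M * ε + x * ε + y * ε + z * ε ≤ δ / 2 := by nlinarith

set_option maxHeartbeats 2000000 in
/-- if `Ψ` changes sign and `α > r`, then the lowest eigenvalue of
`S_ε = d⁴/dx⁴ + U + Ψ_ε` with Dirichlet conditions on `(a,b)` — characterized via
the minimax principle as the infimum of the quadratic form over normalized
admissible functions — satisfies `λ₁^ε ≤ −c ε⁻⁴` for small `ε`. -/
theorem stmt_12 (a b : ℝ) (ha : a < 0) (hb : 0 < b)
    (c₁ c₂ : ℝ) (hc₁ : -1 < c₁) (hc : c₁ < c₂) (hc₂ : c₂ < 1)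
    (Ψ Φ Υ₁ Υ₂ U u : ℝ → ℝ)
    (hΨ : ContDiff ℝ (⊤ : ℕ∞) Ψ) (hΦ : ContDiff ℝ (⊤ : ℕ∞) Φ)
    (hΥ₁ : ContDiff ℝ (⊤ : ℕ∞) Υ₁) (hΥ₂ : ContDiff ℝ (⊤ : ℕ∞) Υ₂)
    (sΨ : tsupport Ψ ⊆ Set.Ioo (-1 : ℝ) 1) (sΦ : tsupport Φ ⊆ Set.Ioo (-1 : ℝ) 1)
    (s₁ : tsupport Υ₁ ⊆ Set.Ioo (-1 : ℝ) 1) (s₂ : tsupport Υ₂ ⊆ Set.Ioo (-1 : ℝ) 1)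
    (hsign : (∃ x, 0 < Ψ x) ∧ ∃ x, Ψ x < 0)
    (hΨneg : ∀ ξ ∈ Set.Icc c₁ c₂, Ψ ξ < 0)
    (hU : ContDiff ℝ (⊤ : ℕ∞) U)
    (hu : ContDiff ℝ (⊤ : ℕ∞) u) (hus : tsupport u ⊆ Set.Ioo c₁ c₂)
    (hnorm : (∫ ξ in c₁..c₂, (u ξ) ^ 2) = 1)
    (α β γ₁ γ₂ : ℝ)
    (hα : α > (∫ ξ in c₁..c₂, (iteratedDeriv 2 u ξ) ^ 2) /
        (∫ ξ in c₁..c₂, |Ψ ξ| * (u ξ) ^ 2)) :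
    ∃ c > 0, ∃ ε₀ > 0, ∀ ε ∈ Set.Ioo (0 : ℝ) ε₀,
      sInf {q : ℝ | ∃ v : ℝ → ℝ, ContDiff ℝ 2 v ∧
          v a = 0 ∧ deriv v a = 0 ∧ v b = 0 ∧ deriv v b = 0 ∧
          (∫ x in a..b, (v x) ^ 2) = 1 ∧
          q = ∫ x in a..b, ((iteratedDeriv 2 v x) ^ 2 +
            (U x + singPert Ψ Φ Υ₁ Υ₂ α β γ₁ γ₂ ε x) * (v x) ^ 2)} ≤
        -c / ε ^ 4 := by
  have hab : a ≤ b := ha.le.trans hb.le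
  -- continuity basics
  have hcu : Continuous u := hu.continuous
  have hcu2 : Continuous (iteratedDeriv 2 u) := hu.continuous_iteratedDeriv 2 (WithTop.coe_le_coe.mpr le_top)
  have hcΨ : Continuous Ψ := hΨ.continuous
  have hcΦ : Continuous Φ := hΦ.continuous
  have hcΥ₁ : Continuous Υ₁ := hΥ₁.continuous
  have hcΥ₂ : Continuous Υ₂ := hΥ₂.continuous
  have hcU : Continuous U := hU.continuous
  -- u and its derivatives vanish outside (c₁, c₂)
  have hu0 : ∀ ξ, ξ ∉ Set.Ioo c₁ c₂ → u ξ = 0 := fun ξ hξ =>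
    image_eq_zero_of_notMem_tsupport (fun h => hξ (hus h))
  have hu20 : ∀ ξ, ξ ∉ Set.Ioo c₁ c₂ → iteratedDeriv 2 u ξ = 0 := fun ξ hξ =>
    iterDeriv_zero_of_nmem (fun h => hξ (hus h))
  -- constants
  set A := ∫ ξ in c₁..c₂, (iteratedDeriv 2 u ξ) ^ 2 with hA
  set B := ∫ ξ in c₁..c₂, (|Ψ ξ|) * (u ξ) ^ 2 with hBdef
  set C := ∫ ξ in c₁..c₂, Φ ξ * (u ξ) ^ 2 with hCdef
  set D := ∫ ξ in c₁..c₂, Υ₁ ξ * (u ξ) ^ 2 with hDdef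
  set E := ∫ ξ in c₁..c₂, Υ₂ ξ * (u ξ) ^ 2 with hEdef
  -- B > 0
  obtain ⟨ξ₀, hξ₀mem, hξ₀min⟩ := isCompact_Icc.exists_isMinOn (Set.nonempty_Icc.mpr hc.le)
    (hcΨ.abs).continuousOn
  have hm : 0 < |Ψ ξ₀| := abs_pos.mpr (hΨneg ξ₀ hξ₀mem).ne
  have hBpos : 0 < B := by
    have h1 : (∫ ξ in c₁..c₂, |Ψ ξ₀| * (u ξ) ^ 2) ≤ B := by
      apply intervalIntegral.integral_mono_on hc.le
        ((continuous_const.mul (hcu.pow 2)).intervalIntegrable _ _)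
        ((hcΨ.abs.mul (hcu.pow 2)).intervalIntegrable _ _)
      intro x hx
      exact mul_le_mul_of_nonneg_right (hξ₀min hx) (sq_nonneg _)
    have h2 : (∫ ξ in c₁..c₂, |Ψ ξ₀| * (u ξ) ^ 2) = |Ψ ξ₀| := by
      rw [intervalIntegral.integral_const_mul, hnorm, mul_one]
    linarith
  have hAB : A < α * B := (div_lt_iff₀ hBpos).mp hα
  set δ := α * B - A with hδdef
  have hδ : 0 < δ := by simp only [hδdef]; linarith
  -- bound for U on [a,b]
  obtain ⟨M, hM⟩ := isCompact_Icc.exists_bound_of_continuousOn (s := Set.Icc a b)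
    hcU.continuousOn
  have hM0 : 0 ≤ M := (norm_nonneg (U 0)).trans (hM 0 ⟨ha.le, hb.le⟩)
  set L := M + |β * C| + |γ₁ * D| + |γ₂ * E| with hLdef
  have hL0 : 0 ≤ L := by positivity
  refine ⟨δ / 2, by positivity, min (min 1 (δ / (2 * (L + 1)))) (min (-a) b),
    lt_min (lt_min one_pos (div_pos hδ (by linarith))) (lt_min (neg_pos.mpr ha) hb), ?_⟩
  rintro ε ⟨hε, hεlt⟩
  have hε1 : ε < 1 := hεlt.trans_le ((min_le_left _ _).trans (min_le_left _ _))
  have hεδ : ε < δ / (2 * (L + 1)) :=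
    hεlt.trans_le ((min_le_left _ _).trans (min_le_right _ _))
  have hεa : ε < -a := hεlt.trans_le ((min_le_right _ _).trans (min_le_left _ _))
  have hεb : ε < b := hεlt.trans_le ((min_le_right _ _).trans (min_le_right _ _))
  have hac₁ : a < ε * c₁ := by nlinarith
  have hbc₂ : ε * c₂ < b := by nlinarith
  have h1 : a / ε ≤ c₁ := (div_le_iff₀ hε).mpr (by nlinarith)
  have h2 : c₂ ≤ b / ε := (le_div_iff₀ hε).mpr (by nlinarith)
  -- the test function
  set s := (Real.sqrt ε)⁻¹ with hsdef
  have hs2 : s ^ 2 = ε⁻¹ := by rw [hsdef, inv_pow, Real.sq_sqrt hε.le]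
  set v : ℝ → ℝ := fun x => s * u (x / ε) with hvdef
  have hv2 : ContDiff ℝ 2 v := contDiff_const.mul ((hu.of_le (WithTop.coe_le_coe.mpr le_top)).comp (contDiff_id.div_const ε))
  have hvx : ∀ x, x / ε < c₁ ∨ c₂ < x / ε → v x = 0 := by
    intro x hx
    have : u (x / ε) = 0 := by
      apply hu0
      intro hmem
      rcases hx with h | h
      · exact absurd hmem.1 (not_lt.mpr h.le)
      · exact absurd hmem.2 (not_lt.mpr h.le)
    simp [hvdef, this]
  have hva : v a = 0 := hvx a (Or.inl ((div_lt_iff₀ hε).mpr (by nlinarith)))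
  have hvb : v b = 0 := hvx b (Or.inr ((lt_div_iff₀ hε).mpr (by nlinarith)))
  have hdva : deriv v a = 0 := by
    have hev : v =ᶠ[𝓝 a] (fun _ => (0:ℝ)) := by
      filter_upwards [Iio_mem_nhds hac₁] with x hx
      exact hvx x (Or.inl ((div_lt_iff₀ hε).mpr (by nlinarith [Set.mem_Iio.mp hx])))
    rw [hev.deriv_eq, deriv_const]
  have hdvb : deriv v b = 0 := by
    have hev : v =ᶠ[𝓝 b] (fun _ => (0:ℝ)) := by
      filter_upwards [Ioi_mem_nhds hbc₂] with x hx
      exact hvx x (Or.inr ((lt_div_iff₀ hε).mpr (by nlinarith [Set.mem_Ioi.mp hx])))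
    rw [hev.deriv_eq, deriv_const]
  -- second derivative formula
  have hgc : ContDiff ℝ 2 (fun ξ => s * u ξ) := contDiff_const.mul (hu.of_le (WithTop.coe_le_coe.mpr le_top))
  have hveq : v = fun x => (fun ξ => s * u ξ) (ε⁻¹ * x) := by
    funext x; simp [hvdef, div_eq_inv_mul]
  have hiter : iteratedDeriv 2 v = fun x => ε⁻¹ ^ 2 * (s * iteratedDeriv 2 u (x / ε)) := by
    rw [hveq, iteratedDeriv_comp_const_mul hgc ε⁻¹, iterDeriv_const_mul_fun s (hu.of_le (WithTop.coe_le_coe.mpr le_top))]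
    funext x
    rw [div_eq_inv_mul]
  -- normalization
  have hInorm : (∫ x in a..b, (v x) ^ 2) = 1 := by
    have hgs : Continuous (fun ξ => (s * u ξ) ^ 2) := by fun_prop
    have := integral_scaled (fun ξ => (s * u ξ) ^ 2) hgs
      (fun x hx => by simp [hu0 x hx]) hε h1 h2
    calc (∫ x in a..b, (v x) ^ 2) = ε * ∫ ξ in c₁..c₂, (s * u ξ) ^ 2 := this
      _ = ε * ∫ ξ in c₁..c₂, s ^ 2 * (u ξ) ^ 2 := by
          congr 1; apply intervalIntegral.integral_congr; intro ξ _; ring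
      _ = ε * (s ^ 2 * 1) := by rw [intervalIntegral.integral_const_mul, hnorm]
      _ = 1 := by rw [hs2]; field_simp
  -- integral of (v'')^2
  have hI1 : (∫ x in a..b, (iteratedDeriv 2 v x) ^ 2) = A / ε ^ 4 := by
    have hgs : Continuous (fun ξ => (ε⁻¹ ^ 2 * (s * iteratedDeriv 2 u ξ)) ^ 2) := by fun_prop
    calc (∫ x in a..b, (iteratedDeriv 2 v x) ^ 2)
        = ∫ x in a..b, (fun ξ => (ε⁻¹ ^ 2 * (s * iteratedDeriv 2 u ξ)) ^ 2) (x / ε) := by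
          apply intervalIntegral.integral_congr; intro x _
          simp only [hiter]
      _ = ε * ∫ ξ in c₁..c₂, (ε⁻¹ ^ 2 * (s * iteratedDeriv 2 u ξ)) ^ 2 :=
          integral_scaled _ hgs (fun x hx => by simp [hu20 x hx]) hε h1 h2
      _ = ε * ∫ ξ in c₁..c₂, (ε⁻¹ ^ 4 * s ^ 2) * (iteratedDeriv 2 u ξ) ^ 2 := by
          congr 1; apply intervalIntegral.integral_congr; intro ξ _; ring
      _ = ε * ((ε⁻¹ ^ 4 * s ^ 2) * A) := by rw [intervalIntegral.integral_const_mul]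
      _ = A / ε ^ 4 := by rw [hs2]; field_simp
  -- integral of U * v^2
  set I2 := ∫ x in a..b, U x * (v x) ^ 2 with hI2def
  have hI2 : I2 ≤ M := by
    have hint1 : IntervalIntegrable (fun x => U x * (v x) ^ 2) volume a b :=
      (hcU.mul (hv2.continuous.pow 2)).intervalIntegrable _ _
    have hint2 : IntervalIntegrable (fun x => M * (v x) ^ 2) volume a b :=
      (continuous_const.mul (hv2.continuous.pow 2)).intervalIntegrable _ _
    have hle : (∫ x in a..b, U x * (v x) ^ 2) ≤ ∫ x in a..b, M * (v x) ^ 2 := by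
      apply intervalIntegral.integral_mono_on hab hint1 hint2
      intro x hx
      have : U x ≤ M := (le_abs_self _).trans (by simpa [Real.norm_eq_abs] using hM x hx)
      exact mul_le_mul_of_nonneg_right this (sq_nonneg _)
    rw [hI2def]
    calc (∫ x in a..b, U x * (v x) ^ 2) ≤ ∫ x in a..b, M * (v x) ^ 2 := hle
      _ = M := by rw [intervalIntegral.integral_const_mul, hInorm, mul_one]
  -- integral of Ψ u^2
  have hPsiB : (∫ ξ in c₁..c₂, Ψ ξ * (u ξ) ^ 2) = -B := by
    rw [hBdef, ← intervalIntegral.integral_neg]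
    apply intervalIntegral.integral_congr
    intro ξ hξ
    rw [Set.uIcc_of_le hc.le] at hξ
    show Ψ ξ * (u ξ) ^ 2 = -(|Ψ ξ| * (u ξ) ^ 2)
    rw [abs_of_neg (hΨneg ξ hξ)]; ring
  -- integral of pert * v^2
  have hI3 : (∫ x in a..b, singPert Ψ Φ Υ₁ Υ₂ α β γ₁ γ₂ ε x * (v x) ^ 2)
      = (α / ε ^ 4) * (-B) + (β / ε ^ 3) * C + (γ₁ / ε ^ 2) * D + (γ₂ / ε) * E := by
    set g3 : ℝ → ℝ := fun ξ => ((α / ε ^ 4) * Ψ ξ + (β / ε ^ 3) * Φ ξ +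
      (γ₁ / ε ^ 2) * Υ₁ ξ + (γ₂ / ε) * Υ₂ ξ) * (s * u ξ) ^ 2 with hg3def
    have hgs : Continuous g3 := by rw [hg3def]; fun_prop
    have heq : (∫ x in a..b, singPert Ψ Φ Υ₁ Υ₂ α β γ₁ γ₂ ε x * (v x) ^ 2)
        = ε * ∫ ξ in c₁..c₂, g3 ξ := by
      have := integral_scaled g3 hgs (fun x hx => by simp [hg3def, hu0 x hx]) hε h1 h2
      rw [← this]
      apply intervalIntegral.integral_congr; intro x _
      simp only [hg3def, singPert, hvdef]
    rw [heq]
    have hsplit : (∫ ξ in c₁..c₂, g3 ξ)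
        = s ^ 2 * ((α / ε ^ 4) * (∫ ξ in c₁..c₂, Ψ ξ * (u ξ) ^ 2)
          + ((β / ε ^ 3) * C + ((γ₁ / ε ^ 2) * D + (γ₂ / ε) * E))) := by
      rw [hCdef, hDdef, hEdef, ← intervalIntegral.integral_const_mul,
        ← intervalIntegral.integral_const_mul, ← intervalIntegral.integral_const_mul,
        ← intervalIntegral.integral_const_mul]
      rw [← intervalIntegral.integral_add (f := (fun x => γ₁ / ε ^ 2 * (Υ₁ x * u x ^ 2))) (g := (fun x => γ₂ / ε * (Υ₂ x * u x ^ 2)))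
        (((continuous_const.mul (hcΥ₁.mul (hcu.pow 2)))).intervalIntegrable _ _)
        (((continuous_const.mul (hcΥ₂.mul (hcu.pow 2)))).intervalIntegrable _ _)]
      rw [← intervalIntegral.integral_add (f := (fun x => β / ε ^ 3 * (Φ x * u x ^ 2))) (g := (fun x => γ₁ / ε ^ 2 * (Υ₁ x * u x ^ 2) + γ₂ / ε * (Υ₂ x * u x ^ 2)))
        (((continuous_const.mul (hcΦ.mul (hcu.pow 2)))).intervalIntegrable _ _)
        (((continuous_const.mul (hcΥ₁.mul (hcu.pow 2))).add
          ((continuous_const.mul (hcΥ₂.mul (hcu.pow 2))))).intervalIntegrable _ _)]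
      rw [← intervalIntegral.integral_add (f := (fun x => α / ε ^ 4 * (Ψ x * u x ^ 2))) (g := (fun x => β / ε ^ 3 * (Φ x * u x ^ 2) + (γ₁ / ε ^ 2 * (Υ₁ x * u x ^ 2) + γ₂ / ε * (Υ₂ x * u x ^ 2))))
        (((continuous_const.mul (hcΨ.mul (hcu.pow 2)))).intervalIntegrable _ _)
        ((((continuous_const.mul (hcΦ.mul (hcu.pow 2)))).add
          (((continuous_const.mul (hcΥ₁.mul (hcu.pow 2))).add
            ((continuous_const.mul (hcΥ₂.mul (hcu.pow 2))))))).intervalIntegrable _ _)]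
      rw [← intervalIntegral.integral_const_mul]
      apply intervalIntegral.integral_congr; intro ξ _
      simp only [hg3def]; ring
    rw [hsplit, hPsiB, hs2]
    field_simp
    ring
  -- continuity of the perturbation
  have hcP : Continuous (fun x => singPert Ψ Φ Υ₁ Υ₂ α β γ₁ γ₂ ε x) := by
    unfold singPert; fun_prop
  have hcv : Continuous v := hv2.continuous
  have hcv2' : Continuous (iteratedDeriv 2 v) := by rw [hiter]; fun_prop
  -- the value of the quadratic form at v
  set q₀ := ∫ x in a..b, ((iteratedDeriv 2 v x) ^ 2 +
      (U x + singPert Ψ Φ Υ₁ Υ₂ α β γ₁ γ₂ ε x) * (v x) ^ 2) with hq₀def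
  have iD : IntervalIntegrable (fun x => (iteratedDeriv 2 v x) ^ 2) volume a b :=
    (hcv2'.pow 2).intervalIntegrable _ _
  have iUv : IntervalIntegrable (fun x => U x * (v x) ^ 2) volume a b :=
    (hcU.mul (hcv.pow 2)).intervalIntegrable _ _
  have iPv : IntervalIntegrable
      (fun x => singPert Ψ Φ Υ₁ Υ₂ α β γ₁ γ₂ ε x * (v x) ^ 2) volume a b :=
    (hcP.mul (hcv.pow 2)).intervalIntegrable _ _
  have hsplitq : q₀ = (∫ x in a..b, (iteratedDeriv 2 v x) ^ 2)
      + ((∫ x in a..b, U x * (v x) ^ 2)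
        + ∫ x in a..b, singPert Ψ Φ Υ₁ Υ₂ α β γ₁ γ₂ ε x * (v x) ^ 2) := by
    rw [hq₀def, ← intervalIntegral.integral_add iUv iPv,
      ← intervalIntegral.integral_add iD (iUv.add iPv)]
    apply intervalIntegral.integral_congr; intro x _
    show (iteratedDeriv 2 v x) ^ 2 + (U x + singPert Ψ Φ Υ₁ Υ₂ α β γ₁ γ₂ ε x) * (v x) ^ 2
      = (iteratedDeriv 2 v x) ^ 2 + (U x * (v x) ^ 2
        + singPert Ψ Φ Υ₁ Υ₂ α β γ₁ γ₂ ε x * (v x) ^ 2)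
    ring
  have hq₀ : q₀ = A / ε ^ 4 + I2 + ((α / ε ^ 4) * (-B) + (β / ε ^ 3) * C
      + (γ₁ / ε ^ 2) * D + (γ₂ / ε) * E) := by
    rw [hsplitq, hI1, hI3, hI2def]; ring
  -- key estimate
  have hε4 : (0:ℝ) < ε ^ 4 := pow_pos hε 4
  have hp2 : ε ^ 2 ≤ ε := by
    simpa using pow_le_pow_of_le_one hε.le hε1.le (by norm_num : 1 ≤ 2)
  have hp3 : ε ^ 3 ≤ ε := by
    simpa using pow_le_pow_of_le_one hε.le hε1.le (by norm_num : 1 ≤ 3)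
  have hp4 : ε ^ 4 ≤ ε := by
    simpa using pow_le_pow_of_le_one hε.le hε1.le (by norm_num : 1 ≤ 4)
  have hεδ2 : ε * (2 * (L + 1)) < δ := (lt_div_iff₀ (by linarith)).mp hεδ
  rw [hLdef] at hεδ2
  have hLε : M * ε + |β * C| * ε + |γ₁ * D| * ε + |γ₂ * E| * ε ≤ δ / 2 :=
    aux_half hε.le hεδ2
  have hkey : q₀ ≤ -(δ / 2) / ε ^ 4 := by
    rw [le_div_iff₀ hε4, hq₀]
    have expand : (A / ε ^ 4 + I2 + ((α / ε ^ 4) * (-B) + (β / ε ^ 3) * C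
          + (γ₁ / ε ^ 2) * D + (γ₂ / ε) * E)) * ε ^ 4
        = (A - α * B) + (I2 * ε ^ 4 + ((β * C) * ε + ((γ₁ * D) * ε ^ 2
          + (γ₂ * E) * ε ^ 3))) := by
      field_simp; ring
    rw [expand]
    have e1 : I2 * ε ^ 4 ≤ M * ε := aux_mul_le hI2 hM0 hε4.le hp4
    have e2 : (β * C) * ε ≤ |β * C| * ε := mul_le_mul_of_nonneg_right (le_abs_self _) hε.le
    have e3 : (γ₁ * D) * ε ^ 2 ≤ |γ₁ * D| * ε := by
      have t1 : (γ₁ * D) * ε ^ 2 ≤ |γ₁ * D| * ε ^ 2 :=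
        mul_le_mul_of_nonneg_right (le_abs_self _) (sq_nonneg ε)
      have t2 : |γ₁ * D| * ε ^ 2 ≤ |γ₁ * D| * ε :=
        mul_le_mul_of_nonneg_left hp2 (abs_nonneg _)
      linarith
    have e4 : (γ₂ * E) * ε ^ 3 ≤ |γ₂ * E| * ε := by
      have t1 : (γ₂ * E) * ε ^ 3 ≤ |γ₂ * E| * ε ^ 3 := by
        apply mul_le_mul_of_nonneg_right (le_abs_self _) (by positivity)
      have t2 : |γ₂ * E| * ε ^ 3 ≤ |γ₂ * E| * ε :=
        mul_le_mul_of_nonneg_left hp3 (abs_nonneg _)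
      linarith
    have hAd : A - α * B = -δ := by rw [hδdef]; ring
    linarith
  -- lower boundedness of the spectral set
  have hbdd : BddBelow {q : ℝ | ∃ v : ℝ → ℝ, ContDiff ℝ 2 v ∧
      v a = 0 ∧ deriv v a = 0 ∧ v b = 0 ∧ deriv v b = 0 ∧
      (∫ x in a..b, (v x) ^ 2) = 1 ∧
      q = ∫ x in a..b, ((iteratedDeriv 2 v x) ^ 2 +
        (U x + singPert Ψ Φ Υ₁ Υ₂ α β γ₁ γ₂ ε x) * (v x) ^ 2)} := by
    obtain ⟨Mw, hMw⟩ := isCompact_Icc.exists_bound_of_continuousOn (s := Set.Icc a b)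
      (hcU.add hcP).continuousOn
    refine ⟨-Mw, ?_⟩
    rintro q ⟨w, hw, -, -, -, -, hwnorm, rfl⟩
    have hcw : Continuous w := hw.continuous
    have hcw2 : Continuous (iteratedDeriv 2 w) := hw.continuous_iteratedDeriv 2 le_rfl
    have hint1 : IntervalIntegrable (fun x => -Mw * (w x) ^ 2) volume a b :=
      (continuous_const.mul (hcw.pow 2)).intervalIntegrable _ _
    have hint2 : IntervalIntegrable (fun x => (iteratedDeriv 2 w x) ^ 2 +
        (U x + singPert Ψ Φ Υ₁ Υ₂ α β γ₁ γ₂ ε x) * (w x) ^ 2) volume a b :=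
      ((hcw2.pow 2).add ((hcU.add hcP).mul (hcw.pow 2))).intervalIntegrable _ _
    have hge : (∫ x in a..b, -Mw * (w x) ^ 2) ≤ ∫ x in a..b, ((iteratedDeriv 2 w x) ^ 2 +
        (U x + singPert Ψ Φ Υ₁ Υ₂ α β γ₁ γ₂ ε x) * (w x) ^ 2) := by
      apply intervalIntegral.integral_mono_on hab hint1 hint2
      intro x hx
      have hb1 : -Mw ≤ U x + singPert Ψ Φ Υ₁ Υ₂ α β γ₁ γ₂ ε x := by
        have := hMw x hx
        rw [Real.norm_eq_abs, Pi.add_apply] at this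
        linarith [(abs_le.mp this).1]
      have h2' := mul_le_mul_of_nonneg_right hb1 (sq_nonneg (w x))
      linarith [sq_nonneg (iteratedDeriv 2 w x)]
    calc -Mw = ∫ x in a..b, -Mw * (w x) ^ 2 := by
          rw [intervalIntegral.integral_const_mul, hwnorm, mul_one]
      _ ≤ _ := hge
  have hmem : q₀ ∈ {q : ℝ | ∃ v : ℝ → ℝ, ContDiff ℝ 2 v ∧
      v a = 0 ∧ deriv v a = 0 ∧ v b = 0 ∧ deriv v b = 0 ∧
      (∫ x in a..b, (v x) ^ 2) = 1 ∧
      q = ∫ x in a..b, ((iteratedDeriv 2 v x) ^ 2 +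
        (U x + singPert Ψ Φ Υ₁ Υ₂ α β γ₁ γ₂ ε x) * (v x) ^ 2)} :=
    ⟨v, hv2, hva, hdva, hvb, hdvb, hInorm, hq₀def⟩
  exact le_trans (csInf_le hbdd hmem) hkey
end

section
/- Under the hypotheses of the convergence theorem (λ^ε → λ, y^ε → v weakly in L², ‖y^ε‖ = 1), the boundary values converge: for k = 0,1,2,3, y^ε{}^{(k)}(±ε) → v^{(k)}(±0) as ε → 0. -/
open MeasureTheory Set Filter Topology

noncomputable def bForm (w ζ : ℝ → ℝ) (t : ℝ) : ℝ :=
  iteratedDeriv 3 w t * ζ t - iteratedDeriv 2 w t * iteratedDeriv 1 ζ t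
    + iteratedDeriv 1 w t * iteratedDeriv 2 ζ t - w t * iteratedDeriv 3 ζ t

lemma iteratedDerivWithin_isOpen' {s : Set ℝ} {f : ℝ → ℝ} {x : ℝ} {n : ℕ}
    (hs : IsOpen s) (hx : x ∈ s) :
    iteratedDerivWithin n f s x = iteratedDeriv n f x := by
  rw [iteratedDerivWithin_eq_iteratedFDerivWithin, iteratedDeriv_eq_iteratedFDeriv,
    iteratedFDerivWithin_of_isOpen n hs hx]

lemma hasDerivAt_iteratedDeriv_of_contDiffAt {w : ℝ → ℝ} {x : ℝ} {k : ℕ}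
    (hw : ContDiffAt ℝ 4 w x) (hk : k < 4) :
    HasDerivAt (iteratedDeriv k w) (iteratedDeriv (k + 1) w x) x := by
  obtain ⟨u, hu, hwu⟩ := hw.contDiffOn le_rfl (by simp)
  set s := interior u with hs
  have hso : IsOpen s := isOpen_interior
  have hxs : x ∈ s := mem_interior_iff_mem_nhds.2 hu
  have hws : ContDiffOn ℝ 4 w s := hwu.mono interior_subset
  have hdiff : DifferentiableOn ℝ (iteratedDerivWithin k w s) s :=
    hws.differentiableOn_iteratedDerivWithin (by exact_mod_cast hk) hso.uniqueDiffOn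
  have heq : (iteratedDerivWithin k w s) =ᶠ[𝓝 x] iteratedDeriv k w := by
    filter_upwards [hso.mem_nhds hxs] with z hz using iteratedDerivWithin_isOpen' hso hz
  have hda : DifferentiableAt ℝ (iteratedDeriv k w) x :=
    (heq.differentiableAt_iff).1 ((hdiff x hxs).differentiableAt (hso.mem_nhds hxs))
  rw [iteratedDeriv_succ]
  exact hda.hasDerivAt

lemma continuousAt_iteratedDeriv_of_contDiffAt {w : ℝ → ℝ} {x : ℝ} {k : ℕ}
    (hw : ContDiffAt ℝ 4 w x) (hk : k ≤ 4) :
    ContinuousAt (iteratedDeriv k w) x := by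
  obtain ⟨u, hu, hwu⟩ := hw.contDiffOn le_rfl (by simp)
  set s := interior u with hs
  have hso : IsOpen s := isOpen_interior
  have hxs : x ∈ s := mem_interior_iff_mem_nhds.2 hu
  have hws : ContDiffOn ℝ 4 w s := hwu.mono interior_subset
  have hcont : ContinuousOn (iteratedDerivWithin k w s) s :=
    hws.continuousOn_iteratedDerivWithin (by exact_mod_cast hk) hso.uniqueDiffOn
  have heq : (iteratedDerivWithin k w s) =ᶠ[𝓝 x] iteratedDeriv k w := by
    filter_upwards [hso.mem_nhds hxs] with z hz using iteratedDerivWithin_isOpen' hso hz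
  exact ((hcont x hxs).continuousAt (hso.mem_nhds hxs)).congr heq

lemma ibp {w ζ : ℝ → ℝ} {s c : ℝ} (hsc : s ≤ c) (hζ : ContDiff ℝ 4 ζ)
    (hw : ∀ x ∈ Icc s c, ContDiffAt ℝ 4 w x) :
    ∫ x in s..c, iteratedDeriv 4 w x * ζ x
      = bForm w ζ c - bForm w ζ s + ∫ x in s..c, w x * iteratedDeriv 4 ζ x := by
  have huIcc : uIcc s c = Icc s c := uIcc_of_le hsc
  have hwcont : ∀ k, k ≤ 4 → ContinuousOn (iteratedDeriv k w) (Icc s c) := fun k hk x hx =>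
    (continuousAt_iteratedDeriv_of_contDiffAt (hw x hx) hk).continuousWithinAt
  have hw0 : ContinuousOn w (Icc s c) := by
    have := hwcont 0 (by norm_num); rwa [iteratedDeriv_zero] at this
  have hζd : ∀ k : ℕ, k < 4 → ∀ x : ℝ, HasDerivAt (iteratedDeriv k ζ) (iteratedDeriv (k+1) ζ x) x :=
    fun k hk x => hasDerivAt_iteratedDeriv_of_contDiffAt hζ.contDiffAt hk
  have hζc : ∀ k : ℕ, k ≤ 4 → Continuous (iteratedDeriv k ζ) := fun k hk =>
    hζ.continuous_iteratedDeriv k (by exact_mod_cast hk)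
  have hζ0 : Continuous ζ := by have := hζc 0 (by norm_num); rwa [iteratedDeriv_zero] at this
  -- derivative of bForm
  have key : ∀ x ∈ uIcc s c,
      HasDerivAt (bForm w ζ) (iteratedDeriv 4 w x * ζ x - w x * iteratedDeriv 4 ζ x) x := by
    intro x hx
    rw [huIcc] at hx
    have W : ∀ k, (hk : k < 4) → HasDerivAt (iteratedDeriv k w) (iteratedDeriv (k+1) w x) x :=
      fun k hk => hasDerivAt_iteratedDeriv_of_contDiffAt (hw x hx) hk
    have Z : ∀ k, (hk : k < 4) → HasDerivAt (iteratedDeriv k ζ) (iteratedDeriv (k+1) ζ x) x :=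
      fun k hk => hζd k hk x
    have W0 : HasDerivAt w (iteratedDeriv 1 w x) x := by
      have := W 0 (by norm_num); rwa [iteratedDeriv_zero] at this
    have Z0 : HasDerivAt ζ (iteratedDeriv 1 ζ x) x := by
      have := Z 0 (by norm_num); rwa [iteratedDeriv_zero] at this
    have H := ((((W 3 (by norm_num)).mul Z0).sub ((W 2 (by norm_num)).mul (Z 1 (by norm_num)))).add
      ((W 1 (by norm_num)).mul (Z 2 (by norm_num)))).sub (W0.mul (Z 3 (by norm_num)))
    have : HasDerivAt (bForm w ζ) _ x := H
    convert this using 1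
    norm_num
    ring
  have hint : IntervalIntegrable
      (fun x => iteratedDeriv 4 w x * ζ x - w x * iteratedDeriv 4 ζ x) volume s c := by
    apply ContinuousOn.intervalIntegrable
    rw [huIcc]
    exact ((hwcont 4 le_rfl).mul hζ0.continuousOn).sub
      (hw0.mul (hζc 4 le_rfl).continuousOn)
  have h1 : IntervalIntegrable (fun x => iteratedDeriv 4 w x * ζ x) volume s c := by
    apply ContinuousOn.intervalIntegrable
    rw [huIcc]; exact (hwcont 4 le_rfl).mul hζ0.continuousOn
  have h2 : IntervalIntegrable (fun x => w x * iteratedDeriv 4 ζ x) volume s c := by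
    apply ContinuousOn.intervalIntegrable
    rw [huIcc]; exact hw0.mul (hζc 4 le_rfl).continuousOn
  have := intervalIntegral.integral_eq_sub_of_hasDerivAt key hint
  rw [intervalIntegral.integral_sub h1 h2] at this
  linarith

lemma iteratedDeriv_zero_fun {n : ℕ} {x : ℝ} : iteratedDeriv n (fun _ : ℝ => (0:ℝ)) x = 0 := by
  induction n generalizing x with
  | zero => simp
  | succ n ih =>
    rw [iteratedDeriv_succ,
      show iteratedDeriv n (fun _ : ℝ => (0:ℝ)) = fun _ => 0 from funext fun z => ih]
    simp

lemma iteratedDeriv_eq_zero_of_eventually {ζ : ℝ → ℝ} {x : ℝ} {n : ℕ}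
    (h : ∀ᶠ z in 𝓝 x, ζ z = 0) : iteratedDeriv n ζ x = 0 := by
  have := Filter.EventuallyEq.iteratedDeriv_eq (f := ζ) (g := fun _ => 0) (x := x) n h
  rw [this]; exact iteratedDeriv_zero_fun

lemma bForm_eq_zero {w ζ : ℝ → ℝ} {b2 c : ℝ} (hc : b2 < c)
    (hζc : ∀ x, b2 ≤ x → ζ x = 0) : bForm w ζ c = 0 := by
  have hev : ∀ᶠ z in 𝓝 c, ζ z = 0 := by
    filter_upwards [Ioi_mem_nhds hc] with z hz using hζc z (le_of_lt hz)
  have h0 : ζ c = 0 := hζc c hc.le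
  have h1 : iteratedDeriv 1 ζ c = 0 := iteratedDeriv_eq_zero_of_eventually hev
  have h2 : iteratedDeriv 2 ζ c = 0 := iteratedDeriv_eq_zero_of_eventually hev
  have h3 : iteratedDeriv 3 ζ c = 0 := iteratedDeriv_eq_zero_of_eventually hev
  simp [bForm, h0, h1, h2, h3]

lemma interval_indicator_mul (f h : ℝ → ℝ) {a b p q : ℝ}
    (hap : a ≤ p) (hpq : p ≤ q) (hqb : q ≤ b) :
    ∫ x in a..b, f x * (Set.indicator (Set.Ioc p q) h) x = ∫ x in p..q, f x * h x := by
  have hab : a ≤ b := hap.trans (hpq.trans hqb)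
  rw [intervalIntegral.integral_of_le hab, intervalIntegral.integral_of_le hpq]
  have hpt : ∀ x, f x * (Set.indicator (Set.Ioc p q) h) x
      = (Set.Ioc p q).indicator (fun z => f z * h z) x := by
    intro x
    by_cases hx : x ∈ Set.Ioc p q <;> simp [hx]
  simp_rw [hpt]
  rw [MeasureTheory.integral_indicator measurableSet_Ioc,
    Measure.restrict_restrict measurableSet_Ioc,
    Set.inter_eq_left.2 (Set.Ioc_subset_Ioc hap hqb)]

lemma weak_interval
    {a b : ℝ} {y : ℕ → ℝ → ℝ} {v : ℝ → ℝ}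
    (hweak : ∀ g : ℝ → ℝ, MemLp g 2 (volume.restrict (Set.Ioo a b)) →
      Tendsto (fun n => ∫ x in a..b, y n x * g x) atTop
        (𝓝 (∫ x in a..b, v x * g x)))
    {p q : ℝ} (hap : a ≤ p) (hpq : p ≤ q) (hqb : q ≤ b)
    (h : ℝ → ℝ) (hh : Continuous h) :
    Tendsto (fun n => ∫ x in p..q, y n x * h x) atTop
      (𝓝 (∫ x in p..q, v x * h x)) := by
  set g : ℝ → ℝ := (Set.Ioc p q).indicator h with hg
  have hmem : MemLp g 2 (volume.restrict (Set.Ioo a b)) := by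
    haveI : IsFiniteMeasure (volume.restrict (Set.Ioo a b)) :=
      ⟨by rw [Measure.restrict_apply_univ]; exact measure_Ioo_lt_top⟩
    obtain ⟨C, hC⟩ := (isCompact_Icc : IsCompact (Set.Icc p q)).exists_bound_of_continuousOn
      hh.continuousOn
    refine MemLp.of_bound (hh.aestronglyMeasurable.indicator measurableSet_Ioc) (max C 0) ?_
    refine Eventually.of_forall fun x => ?_
    by_cases hx : x ∈ Set.Ioc p q
    · rw [hg]; rw [Set.indicator_of_mem hx]
      exact le_trans (hC x (Set.Ioc_subset_Icc_self hx)) (le_max_left _ _)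
    · rw [hg, Set.indicator_of_notMem hx]
      simp
  have H := hweak g hmem
  have e1 : ∀ f : ℝ → ℝ, (∫ x in a..b, f x * g x) = ∫ x in p..q, f x * h x := fun f =>
    interval_indicator_mul f h hap hpq hqb
  simp_rw [e1] at H
  exact H

lemma both_sides
    (a b : ℝ) (ha : a < 0) (hb : 0 < b)
    (U : ℝ → ℝ) (hU : Continuous U)
    (ε : ℕ → ℝ) (hεpos : ∀ n, 0 < ε n) (hε0 : Tendsto ε atTop (𝓝 0))
    (lam : ℕ → ℝ) (lam' : ℝ) (hlam : Tendsto lam atTop (𝓝 lam'))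
    (y : ℕ → ℝ → ℝ) (hy : ∀ n, ContDiff ℝ 4 (y n))
    (hynorm : ∀ n, (∫ x in a..b, (y n x) ^ 2) = 1)
    (heq4 : ∀ n, ∀ x ∈ Icc (ε n) (3*b/4), iteratedDeriv 4 (y n) x = (lam n - U x) * y n x)
    (v : ℝ → ℝ)
    (hv4 : ∀ x, 0 < x → x ≤ 3*b/4 → ContDiffAt ℝ 4 v x)
    (hveq4 : ∀ x, 0 < x → x ≤ 3*b/4 → iteratedDeriv 4 v x = (lam' - U x) * v x)
    (hwk : ∀ h : ℝ → ℝ, Continuous h →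
        Tendsto (fun n => ∫ x in (0:ℝ)..(3*b/4), y n x * h x) atTop
          (𝓝 (∫ x in (0:ℝ)..(3*b/4), v x * h x)))
    (L0 : ℝ) (hL0 : Tendsto v (𝓝[>] (0:ℝ)) (𝓝 L0))
    (ζ : ℝ → ℝ) (hζ : ContDiff ℝ 4 ζ) (hζc : ∀ x, b/2 ≤ x → ζ x = 0) :
    ∃ I : ℝ, Tendsto (fun n => bForm (y n) ζ (ε n)) atTop (𝓝 I)
      ∧ Tendsto (fun t => bForm v ζ t) (𝓝[>] (0:ℝ)) (𝓝 I) := by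
  set c : ℝ := 3*b/4 with hc
  have hc0 : 0 < c := by positivity
  have hcb : c < b := by rw [hc]; linarith
  have hb2c : b/2 < c := by rw [hc]; linarith
  have hζcont : Continuous ζ := hζ.continuous
  have hζ4cont : Continuous (iteratedDeriv 4 ζ) := hζ.continuous_iteratedDeriv 4 (by norm_num)
  set h : ℝ → ℝ := fun x => iteratedDeriv 4 ζ x + (U x - lam') * ζ x with hh
  have hhcont : Continuous h := by
    apply hζ4cont.add ((hU.sub continuous_const).mul hζcont)
  set V : ℝ → ℝ := fun x => if x = 0 then L0 else v x with hV
  -- continuity of V on [0, c]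
  have hVcont : ContinuousOn V (Icc 0 c) := by
    intro x hx
    rcases eq_or_lt_of_le hx.1 with h0 | hpos
    · have hx0 : x = 0 := h0.symm
      subst hx0
      rw [← Set.Ioc_insert_left hc0.le]
      rw [continuousWithinAt_insert_self]
      have hVv : ∀ᶠ z in 𝓝[Set.Ioc (0:ℝ) c] 0, V z = v z := by
        filter_upwards [self_mem_nhdsWithin] with z hz
        simp [hV, ne_of_gt hz.1]
      have hv0 : Tendsto v (𝓝[Set.Ioc (0:ℝ) c] 0) (𝓝 L0) :=
        hL0.mono_left (nhdsWithin_mono 0 Set.Ioc_subset_Ioi_self)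
      have : Tendsto V (𝓝[Set.Ioc (0:ℝ) c] 0) (𝓝 L0) := hv0.congr' (hVv.mono fun z hz => hz.symm)
      simpa [ContinuousWithinAt, hV] using this
    · have hvx : ContinuousAt v x := (hv4 x hpos hx.2).continuousAt
      have hVv : ∀ᶠ z in 𝓝 x, v z = V z := by
        filter_upwards [isOpen_ne.mem_nhds (ne_of_gt hpos)] with z hz
        simp [hV, hz]
      exact (hvx.congr hVv).continuousWithinAt
  have hVh_int : IntervalIntegrable (fun x => V x * h x) volume 0 c :=
    (hVcont.mul hhcont.continuousOn).intervalIntegrable_of_Icc hc0.le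
  set I : ℝ := ∫ x in (0:ℝ)..c, V x * h x with hI
  refine ⟨I, ?_, ?_⟩
  · -- y side

    have hyc : ∀ n, Continuous (y n) := fun n => (hy n).continuous
    obtain ⟨C, hC⟩ := (isCompact_Icc : IsCompact (Icc (0:ℝ) c)).exists_bound_of_continuousOn
      hhcont.continuousOn
    have hC0 : 0 ≤ C := le_trans (norm_nonneg _) (hC 0 ⟨le_rfl, hc0.le⟩)
    obtain ⟨Cz, hCz⟩ := (isCompact_Icc : IsCompact (Icc a b)).exists_bound_of_continuousOn
      hζcont.continuousOn
    have hCz0 : 0 ≤ Cz := le_trans (norm_nonneg _) (hCz 0 ⟨ha.le, hb.le⟩)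
    have hvV : (∫ x in (0:ℝ)..c, v x * h x) = I := by
      rw [hI, intervalIntegral.integral_of_le hc0.le, intervalIntegral.integral_of_le hc0.le]
      apply MeasureTheory.setIntegral_congr_fun measurableSet_Ioc
      intro x hx
      simp [hV, ne_of_gt hx.1]
    have hεltc : ∀ᶠ n in atTop, ε n < c := hε0.eventually_lt_const hc0
    -- the main identity on the y side
    have hid : ∀ᶠ n in atTop, bForm (y n) ζ (ε n)
        = (∫ x in (0:ℝ)..c, y n x * h x) - (∫ x in (0:ℝ)..(ε n), y n x * h x)
          + (lam' - lam n) * ∫ x in (ε n)..c, y n x * ζ x := by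
      filter_upwards [hεltc] with n hn
      have hεc : ε n ≤ c := hn.le
      have hibp := ibp hεc hζ (fun x _ => (hy n).contDiffAt)
      have hz : bForm (y n) ζ c = 0 := bForm_eq_zero hb2c hζc
      have hode : (∫ x in (ε n)..c, iteratedDeriv 4 (y n) x * ζ x)
          = ∫ x in (ε n)..c, ((lam n - U x) * y n x) * ζ x := by
        apply intervalIntegral.integral_congr
        intro x hx
        rw [uIcc_of_le hεc] at hx
        simp only
        rw [heq4 n x hx]
      have i1 : IntervalIntegrable (fun x => y n x * iteratedDeriv 4 ζ x) volume (ε n) c :=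
        ((hyc n).mul hζ4cont).intervalIntegrable _ _
      have i2 : IntervalIntegrable (fun x => ((lam n - U x) * y n x) * ζ x) volume (ε n) c :=
        (((continuous_const.sub hU).mul (hyc n)).mul hζcont).intervalIntegrable _ _
      have i3 : IntervalIntegrable (fun x => y n x * h x) volume (ε n) c :=
        ((hyc n).mul hhcont).intervalIntegrable _ _
      have i3' : IntervalIntegrable (fun x => y n x * h x) volume 0 (ε n) :=
        ((hyc n).mul hhcont).intervalIntegrable _ _
      have i4 : IntervalIntegrable (fun x => (lam' - lam n) * (y n x * ζ x)) volume (ε n) c :=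
        (continuous_const.mul ((hyc n).mul hζcont)).intervalIntegrable _ _
      have e1 : bForm (y n) ζ (ε n)
          = (∫ x in (ε n)..c, y n x * iteratedDeriv 4 ζ x)
            - ∫ x in (ε n)..c, ((lam n - U x) * y n x) * ζ x := by
        rw [← hode]; linarith [hibp, hz]
      have e2 : (∫ x in (ε n)..c, y n x * iteratedDeriv 4 ζ x)
            - (∫ x in (ε n)..c, ((lam n - U x) * y n x) * ζ x)
          = (∫ x in (ε n)..c, y n x * h x)
            + (lam' - lam n) * ∫ x in (ε n)..c, y n x * ζ x := by
        rw [← intervalIntegral.integral_sub i1 i2, ← intervalIntegral.integral_const_mul,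
          ← intervalIntegral.integral_add i3 i4]
        apply intervalIntegral.integral_congr
        intro x _
        simp only [hh]
        ring
      have e3 : (∫ x in (0:ℝ)..(ε n), y n x * h x) + (∫ x in (ε n)..c, y n x * h x)
          = ∫ x in (0:ℝ)..c, y n x * h x :=
        intervalIntegral.integral_add_adjacent_intervals i3' i3
      rw [e1, e2]
      linarith
    -- limit of the three pieces
    have T1 : Tendsto (fun n => ∫ x in (0:ℝ)..c, y n x * h x) atTop (𝓝 I) := by
      have := hwk h hhcont
      rwa [hvV] at this
    have T2 : Tendsto (fun n => ∫ x in (0:ℝ)..(ε n), y n x * h x) atTop (𝓝 0) := by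
      apply squeeze_zero_norm' (a := fun n => C * Real.sqrt (ε n))
      · filter_upwards [hεltc] with n hn
        have hεc : ε n ≤ c := hn.le
        set s : ℝ := Real.sqrt (ε n) with hsdef
        have hs : 0 < s := Real.sqrt_pos.2 (hεpos n)
        have hb1 : |∫ x in (0:ℝ)..(ε n), y n x * h x| ≤ ∫ x in (0:ℝ)..(ε n), |y n x * h x| :=
          intervalIntegral.abs_integral_le_integral_abs (hεpos n).le
        have ibnd : IntervalIntegrable (fun x => (C/2) * (s * (y n x)^2 + s⁻¹)) volume 0 (ε n) :=
          (continuous_const.mul ((continuous_const.mul ((hyc n).pow 2)).add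
            continuous_const)).intervalIntegrable _ _
        have iabs : IntervalIntegrable (fun x => |y n x * h x|) volume 0 (ε n) :=
          ((hyc n).mul hhcont).abs.intervalIntegrable _ _
        have hb2 : (∫ x in (0:ℝ)..(ε n), |y n x * h x|)
            ≤ ∫ x in (0:ℝ)..(ε n), (C/2) * (s * (y n x)^2 + s⁻¹) := by
          apply intervalIntegral.integral_mono_on (hεpos n).le iabs ibnd
          intro x hx
          have hxc : x ∈ Icc (0:ℝ) c := ⟨hx.1, hx.2.trans hεc⟩
          have h1 : |h x| ≤ C := hC x hxc
          have h2 : |y n x| ≤ (s * (y n x)^2 + s⁻¹) / 2 := by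
            rw [le_div_iff₀ (by norm_num : (0:ℝ) < 2), ← sub_nonneg]
            have e : s * (y n x)^2 + s⁻¹ - |y n x| * 2
                = s⁻¹ * ((s * |y n x| - 1)^2) := by
              field_simp
              rw [← sq_abs (y n x)]
              ring
            rw [e]
            exact mul_nonneg (inv_pos.2 hs).le (sq_nonneg _)
          calc |y n x * h x| = |y n x| * |h x| := abs_mul _ _
            _ ≤ ((s * (y n x)^2 + s⁻¹) / 2) * C := by
                apply mul_le_mul h2 h1 (abs_nonneg _)
                positivity
            _ = (C/2) * (s * (y n x)^2 + s⁻¹) := by ring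
        have hb3 : (∫ x in (0:ℝ)..(ε n), (C/2) * (s * (y n x)^2 + s⁻¹))
            = (C/2) * (s * (∫ x in (0:ℝ)..(ε n), (y n x)^2) + s⁻¹ * (ε n)) := by
          rw [intervalIntegral.integral_const_mul, intervalIntegral.integral_add
            (f := fun x => s * (y n x)^2) (g := fun _ => s⁻¹)
            ((continuous_const.mul ((hyc n).pow 2)).intervalIntegrable _ _)
            (intervalIntegrable_const),
            intervalIntegral.integral_const_mul, intervalIntegral.integral_const]
          simp only [smul_eq_mul, sub_zero]
          ring
        have hb4 : (∫ x in (0:ℝ)..(ε n), (y n x)^2) ≤ 1 := by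
          rw [← hynorm n]
          apply intervalIntegral.integral_mono_interval ha.le (hεpos n).le (hεc.trans hcb.le)
          · exact Eventually.of_forall fun x => sq_nonneg _
          · exact ((hyc n).pow 2).intervalIntegrable _ _
        have hsinv : s⁻¹ * ε n = s := by
          rw [hsdef, inv_mul_eq_div, Real.div_sqrt]
        calc ‖∫ x in (0:ℝ)..(ε n), y n x * h x‖ = |∫ x in (0:ℝ)..(ε n), y n x * h x| := rfl
          _ ≤ (C/2) * (s * (∫ x in (0:ℝ)..(ε n), (y n x)^2) + s⁻¹ * (ε n)) := by
              rw [← hb3]; exact hb1.trans hb2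
          _ ≤ (C/2) * (s * 1 + s) := by
              rw [hsinv]
              apply mul_le_mul_of_nonneg_left _ (by positivity)
              have := mul_le_mul_of_nonneg_left hb4 hs.le
              linarith
          _ = C * s := by ring
      · have hsq : Tendsto (fun n => Real.sqrt (ε n)) atTop (𝓝 0) := by
          have : Tendsto Real.sqrt (𝓝 0) (𝓝 0) := by
            have := Real.continuous_sqrt.tendsto 0
            rwa [Real.sqrt_zero] at this
          exact this.comp hε0
        have := hsq.const_mul C
        simpa using this
    have T3 : Tendsto (fun n => (lam' - lam n) * ∫ x in (ε n)..c, y n x * ζ x) atTop (𝓝 0) := by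
      set K : ℝ := Cz/2 * (1 + c) with hK
      have hK0 : 0 ≤ K := by rw [hK]; positivity
      apply squeeze_zero_norm' (a := fun n => |lam' - lam n| * K)
      · filter_upwards [hεltc] with n hn
        have hεc : ε n ≤ c := hn.le
        have hBn : |∫ x in (ε n)..c, y n x * ζ x| ≤ K := by
          have hb1 : |∫ x in (ε n)..c, y n x * ζ x| ≤ ∫ x in (ε n)..c, |y n x * ζ x| :=
            intervalIntegral.abs_integral_le_integral_abs hεc
          have iabs : IntervalIntegrable (fun x => |y n x * ζ x|) volume (ε n) c :=
            ((hyc n).mul hζcont).abs.intervalIntegrable _ _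
          have ibnd : IntervalIntegrable (fun x => (Cz/2) * ((y n x)^2 + 1)) volume (ε n) c :=
            (continuous_const.mul (((hyc n).pow 2).add continuous_const)).intervalIntegrable _ _
          have hb2 : (∫ x in (ε n)..c, |y n x * ζ x|)
              ≤ ∫ x in (ε n)..c, (Cz/2) * ((y n x)^2 + 1) := by
            apply intervalIntegral.integral_mono_on hεc iabs ibnd
            intro x hx
            have hxab : x ∈ Icc a b := ⟨le_trans ha.le (le_trans (hεpos n).le hx.1),
              hx.2.trans hcb.le⟩
            have h1 : |ζ x| ≤ Cz := hCz x hxab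
            have h2 : |y n x| ≤ ((y n x)^2 + 1) / 2 := by
              nlinarith [sq_nonneg (|y n x| - 1), sq_abs (y n x)]
            calc |y n x * ζ x| = |y n x| * |ζ x| := abs_mul _ _
              _ ≤ (((y n x)^2 + 1) / 2) * Cz := by
                  apply mul_le_mul h2 h1 (abs_nonneg _)
                  positivity
              _ = (Cz/2) * ((y n x)^2 + 1) := by ring
          have hb3 : (∫ x in (ε n)..c, (Cz/2) * ((y n x)^2 + 1))
              = (Cz/2) * ((∫ x in (ε n)..c, (y n x)^2) + (c - ε n)) := by
            rw [intervalIntegral.integral_const_mul, intervalIntegral.integral_add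
              (f := fun x => (y n x)^2) (g := fun _ => (1:ℝ))
              (((hyc n).pow 2).intervalIntegrable _ _) (intervalIntegrable_const),
              intervalIntegral.integral_const]
            simp [smul_eq_mul]
          have hb4 : (∫ x in (ε n)..c, (y n x)^2) ≤ 1 := by
            rw [← hynorm n]
            apply intervalIntegral.integral_mono_interval (le_trans ha.le (hεpos n).le)
              hεc hcb.le
            · exact Eventually.of_forall fun x => sq_nonneg _
            · exact ((hyc n).pow 2).intervalIntegrable _ _
          have hce : c - ε n ≤ c := by linarith [hεpos n]
          calc |∫ x in (ε n)..c, y n x * ζ x|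
              ≤ (Cz/2) * ((∫ x in (ε n)..c, (y n x)^2) + (c - ε n)) := by
                rw [← hb3]; exact hb1.trans hb2
            _ ≤ (Cz/2) * (1 + c) := by
                apply mul_le_mul_of_nonneg_left _ (by positivity)
                linarith
            _ = K := by rw [hK]
        rw [norm_mul]
        exact mul_le_mul_of_nonneg_left hBn (abs_nonneg _)
      · have h0 : Tendsto (fun n => lam' - lam n) atTop (𝓝 0) := by
          have := tendsto_const_nhds (x := lam') (f := atTop (α := ℕ)) |>.sub hlam
          simpa using this
        have := (h0.abs).mul_const K
        simpa using this
    have := (T1.sub T2).add T3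
    rw [sub_zero, add_zero] at this
    exact this.congr' (hid.mono fun n hn => hn.symm) |>.congr (fun n => rfl)
  · -- v side
    have hvid : ∀ᶠ t in 𝓝[>] (0:ℝ), bForm v ζ t
        = I - ∫ x in (0:ℝ)..t, V x * h x := by
      filter_upwards [Ioo_mem_nhdsGT_of_mem (⟨le_rfl, hc0⟩ : (0:ℝ) ∈ Ico (0:ℝ) c)]
        with t ht
      have htc : t ≤ c := ht.2.le
      have ht0 : 0 < t := ht.1
      have hvAt : ∀ x ∈ Icc t c, ContDiffAt ℝ 4 v x := fun x hx =>
        hv4 x (lt_of_lt_of_le ht0 hx.1) hx.2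
      have hvcont : ContinuousOn v (Icc t c) := fun x hx =>
        ((hvAt x hx).continuousAt.continuousWithinAt)
      have hibp := ibp htc hζ hvAt
      have hz : bForm v ζ c = 0 := bForm_eq_zero hb2c hζc
      have hode : (∫ x in t..c, iteratedDeriv 4 v x * ζ x)
          = ∫ x in t..c, ((lam' - U x) * v x) * ζ x := by
        apply intervalIntegral.integral_congr
        intro x hx
        rw [uIcc_of_le htc] at hx
        simp only
        rw [hveq4 x (lt_of_lt_of_le ht0 hx.1) hx.2]
      have i1 : IntervalIntegrable (fun x => v x * iteratedDeriv 4 ζ x) volume t c :=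
        (hvcont.mul hζ4cont.continuousOn).intervalIntegrable_of_Icc htc
      have i2 : IntervalIntegrable (fun x => ((lam' - U x) * v x) * ζ x) volume t c :=
        (((continuous_const.sub hU).continuousOn.mul hvcont).mul
          hζcont.continuousOn).intervalIntegrable_of_Icc htc
      have e1 : bForm v ζ t
          = (∫ x in t..c, v x * iteratedDeriv 4 ζ x)
            - ∫ x in t..c, ((lam' - U x) * v x) * ζ x := by
        rw [← hode]; linarith [hibp, hz]
      have e2 : (∫ x in t..c, v x * iteratedDeriv 4 ζ x)
            - (∫ x in t..c, ((lam' - U x) * v x) * ζ x)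
          = ∫ x in t..c, v x * h x := by
        rw [← intervalIntegral.integral_sub i1 i2]
        apply intervalIntegral.integral_congr
        intro x _
        simp only [hh]
        ring
      have e3 : (∫ x in t..c, v x * h x) = ∫ x in t..c, V x * h x := by
        rw [intervalIntegral.integral_of_le htc, intervalIntegral.integral_of_le htc]
        apply MeasureTheory.setIntegral_congr_fun measurableSet_Ioc
        intro x hx
        simp [hV, ne_of_gt (lt_trans ht0 hx.1)]
      have iV1 : IntervalIntegrable (fun x => V x * h x) volume 0 t := by
        apply hVh_int.mono_set
        rw [uIcc_of_le ht0.le, uIcc_of_le hc0.le]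
        exact Icc_subset_Icc_right htc
      have iV2 : IntervalIntegrable (fun x => V x * h x) volume t c := by
        apply hVh_int.mono_set
        rw [uIcc_of_le htc, uIcc_of_le hc0.le]
        exact Icc_subset_Icc_left ht0.le
      have e4 : (∫ x in (0:ℝ)..t, V x * h x) + (∫ x in t..c, V x * h x) = I :=
        intervalIntegral.integral_add_adjacent_intervals iV1 iV2
      rw [e1, e2, e3]
      linarith
    have hprim : Tendsto (fun t => ∫ x in (0:ℝ)..t, V x * h x) (𝓝[>] (0:ℝ)) (𝓝 0) := by
      have hint : IntegrableOn (fun x => V x * h x) (Icc 0 c) volume :=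
        (hVcont.mul hhcont.continuousOn).integrableOn_Icc
      have hco := intervalIntegral.continuousOn_primitive hint
      have hcwa := hco 0 ⟨le_rfl, hc0.le⟩
      have h0 : (∫ x in Ioc (0:ℝ) 0, V x * h x) = 0 := by simp
      rw [ContinuousWithinAt, h0] at hcwa
      have hmono : Tendsto (fun x => ∫ s in Ioc (0:ℝ) x, V s * h s) (𝓝[Ioo (0:ℝ) c] 0)
          (𝓝 0) := hcwa.mono_left (nhdsWithin_mono 0 Ioo_subset_Icc_self)
      rw [nhdsWithin_Ioo_eq_nhdsGT hc0] at hmono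
      apply hmono.congr'
      filter_upwards [self_mem_nhdsWithin] with t (ht : 0 < t)
      rw [intervalIntegral.integral_of_le ht.le]
    have := tendsto_const_nhds (x := I) (f := 𝓝[>] (0:ℝ)) |>.sub hprim
    rw [sub_zero] at this
    exact this.congr' (hvid.mono fun t htt => htt.symm)

noncomputable def cutoff (b : ℝ) : ℝ → ℝ := fun x => Real.smoothTransition ((b/2 - x) / (b/4))

noncomputable def zeta (b : ℝ) (m : ℕ) : ℝ → ℝ := fun x => x ^ m / (m.factorial : ℝ) * cutoff b x

lemma cutoff_contDiff {b : ℝ} (hb : 0 < b) : ContDiff ℝ 4 (cutoff b) := by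
  have h4 : ContDiff ℝ (4:ℕ∞) Real.smoothTransition := Real.smoothTransition.contDiff
  exact (h4.of_le (by norm_num)).comp ((contDiff_const.sub contDiff_id).div_const _)

lemma cutoff_one {b x : ℝ} (hb : 0 < b) (hx : x ≤ b/4) : cutoff b x = 1 := by
  apply Real.smoothTransition.one_of_one_le
  rw [le_div_iff₀ (by linarith)]
  linarith

lemma cutoff_zero {b x : ℝ} (hb : 0 < b) (hx : b/2 ≤ x) : cutoff b x = 0 := by
  apply Real.smoothTransition.zero_of_nonpos
  apply div_nonpos_of_nonpos_of_nonneg (by linarith) (by linarith)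

lemma zeta_contDiff {b : ℝ} (hb : 0 < b) (m : ℕ) : ContDiff ℝ 4 (zeta b m) :=
  ((contDiff_id.pow m).div_const _).mul (cutoff_contDiff hb)

lemma zeta_vanish {b : ℝ} (hb : 0 < b) (m : ℕ) : ∀ x, b/2 ≤ x → zeta b m x = 0 := by
  intro x hx; unfold zeta; rw [cutoff_zero hb hx, mul_zero]

lemma zeta_eqOn {b : ℝ} (hb : 0 < b) (m : ℕ) :
    Set.EqOn (zeta b m) (fun x => x ^ m / (m.factorial : ℝ)) (Iio (b/4)) := by
  intro x hx
  unfold zeta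
  rw [cutoff_one hb (le_of_lt hx), mul_one]

lemma deriv_q1 : deriv (fun x : ℝ => x) = fun _ : ℝ => (1:ℝ) := funext fun x => deriv_id x
lemma deriv_qc (c : ℝ) : deriv (fun _ : ℝ => c) = fun _ : ℝ => (0:ℝ) := funext fun x => deriv_const x c
lemma deriv_q2 : deriv (fun x : ℝ => x^2/2) = fun x : ℝ => x := by
  funext x
  rw [deriv_div_const, deriv_pow_field]
  ring
lemma deriv_q3 : deriv (fun x : ℝ => x^3/6) = fun x : ℝ => x^2/2 := by
  funext x
  rw [deriv_div_const, deriv_pow_field]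
  ring


lemma iteratedDeriv_const' {n : ℕ} {x c : ℝ} (hn : 0 < n) :
    iteratedDeriv n (fun _ : ℝ => c) x = 0 := by
  obtain ⟨k, rfl⟩ : ∃ k, n = k + 1 := ⟨n - 1, (Nat.succ_pred_eq_of_pos hn).symm⟩
  rw [iteratedDeriv_succ', deriv_qc]
  exact iteratedDeriv_zero_fun

lemma it_q1 (t : ℝ) : iteratedDeriv 1 (fun x : ℝ => x) t = 1 := by
  rw [iteratedDeriv_one, deriv_q1]
lemma it2_q1 (t : ℝ) : iteratedDeriv 2 (fun x : ℝ => x) t = 0 := by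
  rw [iteratedDeriv_succ', deriv_q1, iteratedDeriv_const' (by norm_num)]
lemma it3_q1 (t : ℝ) : iteratedDeriv 3 (fun x : ℝ => x) t = 0 := by
  rw [iteratedDeriv_succ', deriv_q1, iteratedDeriv_const' (by norm_num)]
lemma it_q2 (t : ℝ) : iteratedDeriv 1 (fun x : ℝ => x^2/2) t = t := by
  rw [iteratedDeriv_one, deriv_q2]
lemma it2_q2 (t : ℝ) : iteratedDeriv 2 (fun x : ℝ => x^2/2) t = 1 := by
  rw [iteratedDeriv_succ', deriv_q2]; exact it_q1 t
lemma it3_q2 (t : ℝ) : iteratedDeriv 3 (fun x : ℝ => x^2/2) t = 0 := by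
  rw [iteratedDeriv_succ', deriv_q2]; exact it2_q1 t
lemma it_q3 (t : ℝ) : iteratedDeriv 1 (fun x : ℝ => x^3/6) t = t^2/2 := by
  rw [iteratedDeriv_one, deriv_q3]
lemma it2_q3 (t : ℝ) : iteratedDeriv 2 (fun x : ℝ => x^3/6) t = t := by
  rw [iteratedDeriv_succ', deriv_q3]; exact it_q2 t
lemma it3_q3 (t : ℝ) : iteratedDeriv 3 (fun x : ℝ => x^3/6) t = 1 := by
  rw [iteratedDeriv_succ', deriv_q3]; exact it2_q2 t

lemma hq0 : (fun x : ℝ => x ^ 0 / ((Nat.factorial 0 : ℕ) : ℝ)) = fun _ : ℝ => (1:ℝ) := by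
  funext x; norm_num
lemma hq1 : (fun x : ℝ => x ^ 1 / ((Nat.factorial 1 : ℕ) : ℝ)) = fun x : ℝ => x := by
  funext x; norm_num
lemma hq2 : (fun x : ℝ => x ^ 2 / ((Nat.factorial 2 : ℕ) : ℝ)) = fun x : ℝ => x^2/2 := by
  funext x; norm_num [Nat.factorial]
lemma hq3 : (fun x : ℝ => x ^ 3 / ((Nat.factorial 3 : ℕ) : ℝ)) = fun x : ℝ => x^3/6 := by
  funext x; norm_num [Nat.factorial]

lemma bForm_zeta0 {b : ℝ} (hb : 0 < b) (w : ℝ → ℝ) {t : ℝ} (ht : t < b/4) :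
    bForm w (zeta b 0) t = iteratedDeriv 3 w t := by
  have hit : ∀ j : ℕ, iteratedDeriv j (zeta b 0) t
      = iteratedDeriv j (fun x : ℝ => x ^ 0 / ((Nat.factorial 0 : ℕ) : ℝ)) t := fun j =>
    ((zeta_eqOn hb 0).iteratedDeriv_of_isOpen isOpen_Iio j) ht
  unfold bForm
  rw [hit 1, hit 2, hit 3, zeta_eqOn hb 0 ht]
  simp only [hq0]
  rw [iteratedDeriv_const' (by norm_num), iteratedDeriv_const' (by norm_num),
    iteratedDeriv_const' (by norm_num)]
  norm_num

lemma bForm_zeta1 {b : ℝ} (hb : 0 < b) (w : ℝ → ℝ) {t : ℝ} (ht : t < b/4) :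
    bForm w (zeta b 1) t = iteratedDeriv 3 w t * t - iteratedDeriv 2 w t := by
  have hit : ∀ j : ℕ, iteratedDeriv j (zeta b 1) t
      = iteratedDeriv j (fun x : ℝ => x ^ 1 / ((Nat.factorial 1 : ℕ) : ℝ)) t := fun j =>
    ((zeta_eqOn hb 1).iteratedDeriv_of_isOpen isOpen_Iio j) ht
  unfold bForm
  rw [hit 1, hit 2, hit 3, zeta_eqOn hb 1 ht]
  simp only [hq1]
  rw [it_q1, it2_q1, it3_q1]
  norm_num

lemma bForm_zeta2 {b : ℝ} (hb : 0 < b) (w : ℝ → ℝ) {t : ℝ} (ht : t < b/4) :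
    bForm w (zeta b 2) t = iteratedDeriv 3 w t * (t^2/2) - iteratedDeriv 2 w t * t
      + iteratedDeriv 1 w t := by
  have hit : ∀ j : ℕ, iteratedDeriv j (zeta b 2) t
      = iteratedDeriv j (fun x : ℝ => x ^ 2 / ((Nat.factorial 2 : ℕ) : ℝ)) t := fun j =>
    ((zeta_eqOn hb 2).iteratedDeriv_of_isOpen isOpen_Iio j) ht
  unfold bForm
  rw [hit 1, hit 2, hit 3, zeta_eqOn hb 2 ht]
  simp only [hq2]
  rw [it_q2, it2_q2, it3_q2]
  norm_num [Nat.factorial]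

lemma bForm_zeta3 {b : ℝ} (hb : 0 < b) (w : ℝ → ℝ) {t : ℝ} (ht : t < b/4) :
    bForm w (zeta b 3) t = iteratedDeriv 3 w t * (t^3/6) - iteratedDeriv 2 w t * (t^2/2)
      + iteratedDeriv 1 w t * t - w t := by
  have hit : ∀ j : ℕ, iteratedDeriv j (zeta b 3) t
      = iteratedDeriv j (fun x : ℝ => x ^ 3 / ((Nat.factorial 3 : ℕ) : ℝ)) t := fun j =>
    ((zeta_eqOn hb 3).iteratedDeriv_of_isOpen isOpen_Iio j) ht
  unfold bForm
  rw [hit 1, hit 2, hit 3, zeta_eqOn hb 3 ht]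
  simp only [hq3]
  rw [it_q3, it2_q3, it3_q3]
  norm_num [Nat.factorial]

lemma key (a b : ℝ) (ha : a < 0) (hb : 0 < b)
    (U : ℝ → ℝ) (hU : Continuous U)
    (ε : ℕ → ℝ) (hεpos : ∀ n, 0 < ε n) (hε0 : Tendsto ε atTop (𝓝 0))
    (lam : ℕ → ℝ) (lam' : ℝ) (hlam : Tendsto lam atTop (𝓝 lam'))
    (y : ℕ → ℝ → ℝ) (hy : ∀ n, ContDiff ℝ 4 (y n))
    (hynorm : ∀ n, (∫ x in a..b, (y n x) ^ 2) = 1)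
    (heq4 : ∀ n, ∀ x ∈ Icc (ε n) (3*b/4), iteratedDeriv 4 (y n) x = (lam n - U x) * y n x)
    (v : ℝ → ℝ)
    (hv4 : ∀ x, 0 < x → x ≤ 3*b/4 → ContDiffAt ℝ 4 v x)
    (hveq4 : ∀ x, 0 < x → x ≤ 3*b/4 → iteratedDeriv 4 v x = (lam' - U x) * v x)
    (hwk : ∀ h : ℝ → ℝ, Continuous h →
        Tendsto (fun n => ∫ x in (0:ℝ)..(3*b/4), y n x * h x) atTop
          (𝓝 (∫ x in (0:ℝ)..(3*b/4), v x * h x)))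
    (L : ℕ → ℝ)
    (hL : ∀ k ≤ 3, Tendsto (fun x => iteratedDeriv k v x) (𝓝[>] (0:ℝ)) (𝓝 (L k))) :
    ∀ k ≤ 3, Tendsto (fun n => iteratedDeriv k (y n) (ε n)) atTop (𝓝 (L k)) := by
  have hL0 : Tendsto v (𝓝[>] (0:ℝ)) (𝓝 (L 0)) := by
    have := hL 0 (by norm_num)
    simpa [iteratedDeriv_zero] using this
  have hL1 := hL 1 (by norm_num)
  have hL2 := hL 2 (by norm_num)
  have hL3 := hL 3 (by norm_num)
  have hb4 : 0 < b/4 := by linarith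
  have hIoo : Ioo (0:ℝ) (b/4) ∈ 𝓝[>] (0:ℝ) := Ioo_mem_nhdsGT_of_mem ⟨le_rfl, hb4⟩
  have hev : ∀ᶠ n in atTop, ε n < b/4 := hε0.eventually_lt_const hb4
  have ht0 : Tendsto (fun t : ℝ => t) (𝓝[>] (0:ℝ)) (𝓝 0) :=
    tendsto_id.mono_left nhdsWithin_le_nhds
  obtain ⟨I0, hy0, hv0⟩ := both_sides a b ha hb U hU ε hεpos hε0 lam lam' hlam y hy hynorm
    heq4 v hv4 hveq4 hwk (L 0) hL0 (zeta b 0) (zeta_contDiff hb 0) (zeta_vanish hb 0)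
  obtain ⟨I1, hy1, hv1⟩ := both_sides a b ha hb U hU ε hεpos hε0 lam lam' hlam y hy hynorm
    heq4 v hv4 hveq4 hwk (L 0) hL0 (zeta b 1) (zeta_contDiff hb 1) (zeta_vanish hb 1)
  obtain ⟨I2, hy2, hv2⟩ := both_sides a b ha hb U hU ε hεpos hε0 lam lam' hlam y hy hynorm
    heq4 v hv4 hveq4 hwk (L 0) hL0 (zeta b 2) (zeta_contDiff hb 2) (zeta_vanish hb 2)
  obtain ⟨I3, hy3, hv3⟩ := both_sides a b ha hb U hU ε hεpos hε0 lam lam' hlam y hy hynorm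
    heq4 v hv4 hveq4 hwk (L 0) hL0 (zeta b 3) (zeta_contDiff hb 3) (zeta_vanish hb 3)
  -- identify the limits via the v side
  have hI0 : I0 = L 3 := by
    refine tendsto_nhds_unique hv0 ?_
    apply hL3.congr'
    filter_upwards [hIoo] with t htt using (bForm_zeta0 hb v htt.2).symm
  have hI1 : I1 = L 3 * 0 - L 2 := by
    refine tendsto_nhds_unique hv1 ?_
    apply ((hL3.mul ht0).sub hL2).congr'
    filter_upwards [hIoo] with t htt using (bForm_zeta1 hb v htt.2).symm
  have ht2 : Tendsto (fun t : ℝ => t^2/2) (𝓝[>] (0:ℝ)) (𝓝 0) := by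
    have := (ht0.mul ht0).div_const 2
    have e : ∀ t : ℝ, t * t / 2 = t^2/2 := fun t => by ring
    simpa [e] using this
  have ht3 : Tendsto (fun t : ℝ => t^3/6) (𝓝[>] (0:ℝ)) (𝓝 0) := by
    have := ((ht0.mul ht0).mul ht0).div_const 6
    have e : ∀ t : ℝ, t * t * t / 6 = t^3/6 := fun t => by ring
    simpa [e] using this
  have hI2 : I2 = L 3 * 0 - L 2 * 0 + L 1 := by
    refine tendsto_nhds_unique hv2 ?_
    apply (((hL3.mul ht2).sub (hL2.mul ht0)).add hL1).congr'
    filter_upwards [hIoo] with t htt using (bForm_zeta2 hb v htt.2).symm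
  have hI3 : I3 = L 3 * 0 - L 2 * 0 + L 1 * 0 - L 0 := by
    refine tendsto_nhds_unique hv3 ?_
    apply ((((hL3.mul ht3).sub (hL2.mul ht2)).add (hL1.mul ht0)).sub hL0).congr'
    filter_upwards [hIoo] with t htt using (bForm_zeta3 hb v htt.2).symm
  -- now the y side, step by step
  have st3 : Tendsto (fun n => iteratedDeriv 3 (y n) (ε n)) atTop (𝓝 (L 3)) := by
    rw [← hI0]
    apply hy0.congr'
    filter_upwards [hev] with n hn using bForm_zeta0 hb (y n) hn
  have hε2 : Tendsto (fun n => (ε n)^2/2) atTop (𝓝 0) := by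
    have := (hε0.mul hε0).div_const 2
    have e : ∀ t : ℝ, t * t / 2 = t^2/2 := fun t => by ring
    simpa [e] using this
  have hε3 : Tendsto (fun n => (ε n)^3/6) atTop (𝓝 0) := by
    have := ((hε0.mul hε0).mul hε0).div_const 6
    have e : ∀ t : ℝ, t * t * t / 6 = t^3/6 := fun t => by ring
    simpa [e] using this
  have st2 : Tendsto (fun n => iteratedDeriv 2 (y n) (ε n)) atTop (𝓝 (L 2)) := by
    have h1 : Tendsto (fun n => iteratedDeriv 3 (y n) (ε n) * ε n
        - bForm (y n) (zeta b 1) (ε n)) atTop (𝓝 (L 3 * 0 - I1)) := (st3.mul hε0).sub hy1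
    have e : L 3 * 0 - I1 = L 2 := by rw [hI1]; ring
    rw [e] at h1
    apply h1.congr'
    filter_upwards [hev] with n hn
    rw [bForm_zeta1 hb (y n) hn]
    ring
  have st1 : Tendsto (fun n => iteratedDeriv 1 (y n) (ε n)) atTop (𝓝 (L 1)) := by
    have h1 : Tendsto (fun n => bForm (y n) (zeta b 2) (ε n)
        - iteratedDeriv 3 (y n) (ε n) * ((ε n)^2/2) + iteratedDeriv 2 (y n) (ε n) * ε n)
        atTop (𝓝 (I2 - L 3 * 0 + L 2 * 0)) := (hy2.sub (st3.mul hε2)).add (st2.mul hε0)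
    have e : I2 - L 3 * 0 + L 2 * 0 = L 1 := by rw [hI2]; ring
    rw [e] at h1
    apply h1.congr'
    filter_upwards [hev] with n hn
    rw [bForm_zeta2 hb (y n) hn]
    ring
  have st0 : Tendsto (fun n => y n (ε n)) atTop (𝓝 (L 0)) := by
    have h1 : Tendsto (fun n => iteratedDeriv 3 (y n) (ε n) * ((ε n)^3/6)
        - iteratedDeriv 2 (y n) (ε n) * ((ε n)^2/2) + iteratedDeriv 1 (y n) (ε n) * ε n
        - bForm (y n) (zeta b 3) (ε n))
        atTop (𝓝 (L 3 * 0 - L 2 * 0 + L 1 * 0 - I3)) :=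
      (((st3.mul hε3).sub (st2.mul hε2)).add (st1.mul hε0)).sub hy3
    have e : L 3 * 0 - L 2 * 0 + L 1 * 0 - I3 = L 0 := by rw [hI3]; ring
    rw [e] at h1
    apply h1.congr'
    filter_upwards [hev] with n hn
    rw [bForm_zeta3 hb (y n) hn]
    ring
  intro k hk
  interval_cases k
  · simpa [iteratedDeriv_zero] using st0
  · exact st1
  · exact st2
  · exact st3

-- support vanishing
lemma singPert_zero (Ψ Φ Υ₁ Υ₂ : ℝ → ℝ)
    (sΨ : tsupport Ψ ⊆ Set.Ioo (-1 : ℝ) 1) (sΦ : tsupport Φ ⊆ Set.Ioo (-1 : ℝ) 1)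
    (s₁ : tsupport Υ₁ ⊆ Set.Ioo (-1 : ℝ) 1) (s₂ : tsupport Υ₂ ⊆ Set.Ioo (-1 : ℝ) 1)
    (α β γ₁ γ₂ : ℝ) {ε x : ℝ} (hε : 0 < ε) (hx : ε ≤ |x|) :
    singPert Ψ Φ Υ₁ Υ₂ α β γ₁ γ₂ ε x = 0 := by
  have hmem : x / ε ∉ Set.Ioo (-1 : ℝ) 1 := by
    intro hm
    have h1 : |x / ε| < 1 := abs_lt.2 ⟨hm.1, hm.2⟩
    rw [abs_div, abs_of_pos hε] at h1
    rw [div_lt_iff₀ hε, one_mul] at h1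
    linarith
  have hΨ : Ψ (x / ε) = 0 := image_eq_zero_of_notMem_tsupport (fun hc => hmem (sΨ hc))
  have hΦ : Φ (x / ε) = 0 := image_eq_zero_of_notMem_tsupport (fun hc => hmem (sΦ hc))
  have h₁ : Υ₁ (x / ε) = 0 := image_eq_zero_of_notMem_tsupport (fun hc => hmem (s₁ hc))
  have h₂ : Υ₂ (x / ε) = 0 := image_eq_zero_of_notMem_tsupport (fun hc => hmem (s₂ hc))
  simp [singPert, hΨ, hΦ, h₁, h₂]





/-- under the hypotheses of the convergence theorem
(`λ^ε → λ`, `y^ε ⇀ v` weakly in `L²`, `‖y^ε‖ = 1`), the boundary values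
converge: for `k = 0,1,2,3`, `y^ε⁽ᵏ⁾(±ε) → v⁽ᵏ⁾(±0)` as `ε → 0`. -/
theorem stmt_16 (a b : ℝ) (ha : a < 0) (hb : 0 < b)
    (U Ψ Φ Υ₁ Υ₂ : ℝ → ℝ) (hU : ContDiff ℝ (⊤ : ℕ∞) U)
    (sΨ : tsupport Ψ ⊆ Set.Ioo (-1 : ℝ) 1) (sΦ : tsupport Φ ⊆ Set.Ioo (-1 : ℝ) 1)
    (s₁ : tsupport Υ₁ ⊆ Set.Ioo (-1 : ℝ) 1) (s₂ : tsupport Υ₂ ⊆ Set.Ioo (-1 : ℝ) 1)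
    (α β γ₁ γ₂ : ℝ)
    (ε : ℕ → ℝ) (hεpos : ∀ n, 0 < ε n) (hε0 : Tendsto ε atTop (𝓝 0))
    (lam : ℕ → ℝ) (lam' : ℝ) (hlam : Tendsto lam atTop (𝓝 lam'))
    (y : ℕ → ℝ → ℝ) (hy : ∀ n, ContDiff ℝ 4 (y n))
    (hynorm : ∀ n, (∫ x in a..b, (y n x) ^ 2) = 1)
    (hybc : ∀ n, y n a = 0 ∧ deriv (y n) a = 0 ∧ y n b = 0 ∧ deriv (y n) b = 0)
    (heq : ∀ n, ∀ x ∈ Set.Ioo a b,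
      iteratedDeriv 4 (y n) x + U x * y n x +
        singPert Ψ Φ Υ₁ Υ₂ α β γ₁ γ₂ (ε n) x * y n x = lam n * y n x)
    (v : ℝ → ℝ) (hv : ContDiffOn ℝ 4 v (Set.Ioo a b \ {0}))
    (hveq : ∀ x ∈ Set.Ioo a b, x ≠ 0 →
      iteratedDeriv 4 v x + U x * v x = lam' * v x)
    (hweak : ∀ g : ℝ → ℝ, MemLp g 2 (volume.restrict (Set.Ioo a b)) →
      Tendsto (fun n => ∫ x in a..b, y n x * g x) atTop
        (𝓝 (∫ x in a..b, v x * g x)))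
    (L M : ℕ → ℝ)
    (hL : ∀ k ≤ 3, Tendsto (fun x => iteratedDeriv k v x) (𝓝[>] (0 : ℝ)) (𝓝 (L k)))
    (hM : ∀ k ≤ 3, Tendsto (fun x => iteratedDeriv k v x) (𝓝[<] (0 : ℝ)) (𝓝 (M k))) :
    ∀ k ≤ 3,
      Tendsto (fun n => iteratedDeriv k (y n) (ε n)) atTop (𝓝 (L k)) ∧
      Tendsto (fun n => iteratedDeriv k (y n) (-(ε n))) atTop (𝓝 (M k)) := by
  have hUc : Continuous U := hU.continuous
  have hopen : IsOpen (Set.Ioo a b \ {0}) := isOpen_Ioo.sdiff isClosed_singleton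
  -- the clean fourth-order equation away from the support
  have hode : ∀ n, ∀ x ∈ Set.Ioo a b, ε n ≤ |x| →
      iteratedDeriv 4 (y n) x = (lam n - U x) * y n x := by
    intro n x hx hax
    have hz := singPert_zero Ψ Φ Υ₁ Υ₂ sΨ sΦ s₁ s₂ α β γ₁ γ₂ (hεpos n) hax
    have := heq n x hx
    rw [hz] at this
    linarith [this]
  -- RIGHT SIDE
  have right : ∀ k ≤ 3, Tendsto (fun n => iteratedDeriv k (y n) (ε n)) atTop (𝓝 (L k)) := by
    apply key a b ha hb U hUc ε hεpos hε0 lam lam' hlam y hy hynorm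
    · -- heq4
      intro n x hx
      have hx1 : 0 < x := lt_of_lt_of_le (hεpos n) hx.1
      have hxb : x < b := lt_of_le_of_lt hx.2 (by linarith)
      exact hode n x ⟨lt_trans ha hx1, hxb⟩ (by rw [abs_of_pos hx1]; exact hx.1)
    · -- hv4
      intro x hx1 hx2
      exact hv.contDiffAt (hopen.mem_nhds ⟨⟨lt_trans ha hx1, lt_of_le_of_lt hx2 (by linarith)⟩,
        by simp [ne_of_gt hx1]⟩)
    · -- hveq4
      intro x hx1 hx2
      have := hveq x ⟨lt_trans ha hx1, lt_of_le_of_lt hx2 (by linarith)⟩ (ne_of_gt hx1)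
      linarith [this]
    · -- hwk
      intro h hh
      exact weak_interval hweak ha.le (by linarith) (by linarith) h hh
    · exact hL
  -- LEFT SIDE via reflection
  have hba : (0:ℝ) < -a := by linarith
  have hneg : Tendsto (fun t : ℝ => -t) (𝓝[>] (0:ℝ)) (𝓝[<] (0:ℝ)) := by
    apply tendsto_nhdsWithin_of_tendsto_nhds_of_eventually_within
    · have : Tendsto (fun t : ℝ => -t) (𝓝 (0:ℝ)) (𝓝 (-0:ℝ)) := (continuous_neg.tendsto 0)
      rw [neg_zero] at this
      exact this.mono_left nhdsWithin_le_nhds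
    · filter_upwards [self_mem_nhdsWithin] with t (ht : (0:ℝ) < t)
      simpa using ht
  have hcomp : ∀ (k : ℕ) (f : ℝ → ℝ) (t : ℝ),
      iteratedDeriv k (fun x => f (-x)) t = (-1:ℝ)^k * iteratedDeriv k f (-t) := by
    intro k f t
    rw [iteratedDeriv_comp_neg, smul_eq_mul]
  have left0 : ∀ k ≤ 3, Tendsto (fun n => iteratedDeriv k (fun x => y n (-x)) (ε n)) atTop
      (𝓝 ((-1:ℝ)^k * M k)) := by
    apply key (-b) (-a) (by linarith) hba (fun x => U (-x)) (hUc.comp continuous_neg)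
      ε hεpos hε0 lam lam' hlam (fun n x => y n (-x))
      (fun n => (hy n).comp contDiff_neg) (v := fun x => v (-x))
    · -- norm
      intro n
      have := intervalIntegral.integral_comp_neg (a := -b) (b := -a) (fun x => (y n x)^2)
      simp only [neg_neg] at this
      rw [this]
      exact hynorm n
    · -- heq4 reflected
      intro n x hx
      have hx1 : 0 < x := lt_of_lt_of_le (hεpos n) hx.1
      have hxa : x < -a := lt_of_le_of_lt hx.2 (by linarith)
      rw [hcomp 4 (y n) x]
      have hode' := hode n (-x) ⟨by linarith, by linarith⟩
        (by rw [abs_of_neg (by linarith : -x < 0)]; simpa using hx.1)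
      rw [hode']
      ring
    · -- hv4 reflected
      intro x hx1 hx2
      have hm : -x ∈ Set.Ioo a b \ {0} :=
        ⟨⟨by linarith [lt_of_le_of_lt hx2 (by linarith : 3*(-a)/4 < -a)], by linarith⟩,
          by simp; intro hc; linarith [hc ▸ hx1]⟩
      exact (hv.contDiffAt (hopen.mem_nhds hm)).comp x contDiff_neg.contDiffAt
    · -- hveq4 reflected
      intro x hx1 hx2
      rw [hcomp 4 v x]
      have hxa : x < -a := lt_of_le_of_lt hx2 (by linarith)
      have := hveq (-x) ⟨by linarith, by linarith⟩ (by intro hc; rw [neg_eq_zero] at hc; linarith [hc ▸ hx1])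
      have e : iteratedDeriv 4 v (-x) = (lam' - U (-x)) * v (-x) := by linarith [this]
      rw [e]
      ring
    · -- hwk reflected
      intro h hh
      have base := weak_interval hweak (p := -(3*(-a)/4)) (q := 0)
        (by linarith) (by linarith) hb.le (fun x => h (-x)) (hh.comp continuous_neg)
      have eL : ∀ f : ℝ → ℝ, (∫ x in (0:ℝ)..(3*(-a)/4), f (-x) * h x)
          = ∫ x in -(3*(-a)/4)..(0:ℝ), f x * h (-x) := by
        intro f
        have := intervalIntegral.integral_comp_neg (a := (0:ℝ)) (b := 3*(-a)/4)
          (fun x => f x * h (-x))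
        simp only [neg_neg, neg_zero] at this
        rw [this]
      have g1 : ∀ n, (∫ x in (0:ℝ)..(3*(-a)/4), y n (-x) * h x)
          = ∫ x in -(3*(-a)/4)..(0:ℝ), y n x * h (-x) := fun n => eL (y n)
      have g2 := eL v
      rw [g2]
      simp only [g1]
      exact base
    · -- hL reflected
      intro k hk
      have hMk := hM k hk
      have := hMk.comp hneg
      have h2 := this.const_mul ((-1:ℝ)^k)
      apply h2.congr'
      filter_upwards with t
      rw [hcomp k v t]
      rfl
  intro k hk
  refine ⟨right k hk, ?_⟩
  have hl := left0 k hk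
  have h2 := hl.const_mul ((-1:ℝ)^k)
  have e1 : (-1:ℝ)^k * ((-1:ℝ)^k * M k) = M k := by
    rw [← mul_assoc, ← mul_pow]
    norm_num
  rw [e1] at h2
  apply h2.congr
  intro n
  rw [hcomp k (y n) (ε n), ← mul_assoc, ← mul_pow]
  norm_num
end
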